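/- Let δ with 0 < δ ≤ 1 be a constant with the following (Razborov-type) property: for every positive integer n', every integer m' with n'/4 − δn' ≤ m' ≤ n'/4, and every rectangle R' = A' × B' over m'-element subsets of {1,…,n'} with μ_{0,n',m'}(R') ≥ 2^{−δn'}, one has μ_{1,n',m'}(R') ≥ (2/3)·μ_{0,n',m'}(R'). Then there exist β > 0 and n₀ such that for every n ≥ n₀ divisible by 4 and every rectangle R = A × B over (n/4)-element subsets of {1,…,n} that has a witness element i ∈ {1,…,n} with i ∈ x ∩ y for all (x,y) ∈ R: either μ_{1,n,n/4}(R) ≤ 2^{−βn}, or μ_{2,n,n/4}(R) ≥ (4/3)·μ_{1,n,n/4}(R). -/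

import Mathlib

/-- `T n m k` : the set of pairs `(x, y)` of subsets of `{1,…,n}` (modeled as `Fin n`)
with `|x| = |y| = m` and `|x ∩ y| = k`. -/
def T (n m k : ℕ) : Finset (Finset (Fin n) × Finset (Fin n)) :=
  Finset.univ.filter (fun p => p.1.card = m ∧ p.2.card = m ∧ (p.1 ∩ p.2).card = k)

/-- `mu n m k R = |R ∩ T_{k,n,m}| / |T_{k,n,m}|`. -/
noncomputable def mu (n m k : ℕ) (R : Finset (Finset (Fin n) × Finset (Fin n))) : ℝ :=
  ((R ∩ T n m k).card : ℝ) / ((T n m k).card : ℝ)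

/-!
Deleting the common element `i` from every set turns `R = A × B` into a rectangle `R'` of
`(n/4 - 1)`-subsets of an `(n - 1)`-set and lowers every intersection size by one. Since a
uniform pair in `T_{k+1,n,m}` together with a uniform point of its intersection is a uniform
pair in `T_{k,n-1,m-1}` together with a uniform point of `{1,…,n}`, this gives
`μ_{k+1}(R) = (k + 1)/n · μ_k(R')`. So if `μ₁(R) > 2^{-δn/2}`, then `μ₀(R') = n μ₁(R)` is large
enough for the Razborov property, and `μ₁(R') ≥ (2/3) μ₀(R')` reads `μ₂(R) ≥ (4/3) μ₁(R)`.
-/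

open Finset

lemma sum_card_eq_sum_card_filter_mem {α β : Type*} [Fintype β] [DecidableEq β]
    (S : Finset α) (f : α → Finset β) : ∑ p ∈ S, #(f p) = ∑ j, #{p ∈ S | j ∈ f p} := by
  simp only [card_eq_sum_ones, sum_filter]
  rw [sum_comm]
  simp

section InsertAt

variable {N : ℕ} (i : Fin (N + 1))

def insertAt (s : Finset (Fin N)) : Finset (Fin (N + 1)) :=
  insert i (s.map i.succAboveEmb)

lemma notMem_map_succAboveEmb (s : Finset (Fin N)) : i ∉ s.map i.succAboveEmb := by
  simp [Fin.succAbove_ne]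

lemma mem_insertAt_succAbove {s : Finset (Fin N)} {j : Fin N} :
    i.succAbove j ∈ insertAt i s ↔ j ∈ s := by
  simp [insertAt, Fin.succAbove_ne]

lemma card_insertAt (s : Finset (Fin N)) : #(insertAt i s) = #s + 1 := by
  rw [insertAt, card_insert_of_notMem (notMem_map_succAboveEmb i s), card_map]

lemma insertAt_inter (s t : Finset (Fin N)) :
    insertAt i s ∩ insertAt i t = insertAt i (s ∩ t) := by
  ext a
  obtain rfl | ⟨j, rfl⟩ := Fin.eq_self_or_eq_succAbove i a
  · simp [insertAt]
  · simp only [mem_inter, mem_insertAt_succAbove]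

lemma insertAt_injective : Function.Injective (insertAt i) := by
  intro s t h
  ext j
  rw [← mem_insertAt_succAbove i, h, mem_insertAt_succAbove]

lemma exists_insertAt_eq {x : Finset (Fin (N + 1))} (hx : i ∈ x) : ∃ s, insertAt i s = x := by
  refine ⟨({j | i.succAbove j ∈ x} : Finset (Fin N)), ?_⟩
  ext a
  obtain rfl | ⟨j, rfl⟩ := Fin.eq_self_or_eq_succAbove i a
  · simp [insertAt, hx]
  · simp [mem_insertAt_succAbove]

def insertAtEmb : Finset (Fin N) ↪ Finset (Fin (N + 1)) := ⟨insertAt i, insertAt_injective i⟩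

def liftAt (A : Finset (Finset (Fin (N + 1)))) : Finset (Finset (Fin N)) :=
  {s | insertAt i s ∈ A}

lemma card_of_mem_liftAt {A : Finset (Finset (Fin (N + 1)))} {M : ℕ}
    (hA : ∀ x ∈ A, #x = M + 1) {s : Finset (Fin N)} (hs : s ∈ liftAt i A) : #s = M := by
  have := hA _ (mem_filter.1 hs).2
  rwa [card_insertAt, add_left_inj] at this

lemma insertAt_mem_T_iff {s t : Finset (Fin N)} {M k : ℕ} :
    (insertAt i s, insertAt i t) ∈ T (N + 1) (M + 1) (k + 1) ↔ (s, t) ∈ T N M k := by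
  simp [T, card_insertAt, insertAt_inter]

lemma card_product_inter_T_succ {A B : Finset (Finset (Fin (N + 1)))}
    (hAB : ∀ x ∈ A, ∀ y ∈ B, i ∈ x ∩ y) (M k : ℕ) :
    #((A ×ˢ B) ∩ T (N + 1) (M + 1) (k + 1)) = #((liftAt i A ×ˢ liftAt i B) ∩ T N M k) := by
  rw [← card_map ((insertAtEmb i).prodMap (insertAtEmb i))]
  congr 1
  ext ⟨x, y⟩
  simp only [mem_map, mem_inter, mem_product, Function.Embedding.prodMap, insertAtEmb, liftAt,
    mem_filter, mem_univ, true_and, Function.Embedding.coeFn_mk, Prod.map, Prod.mk.injEq,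
    Prod.exists]
  constructor
  · rintro ⟨⟨hx, hy⟩, hT⟩
    have hixy := mem_inter.1 (hAB x hx y hy)
    obtain ⟨s, rfl⟩ := exists_insertAt_eq i hixy.1
    obtain ⟨t, rfl⟩ := exists_insertAt_eq i hixy.2
    exact ⟨s, t, ⟨⟨hx, hy⟩, (insertAt_mem_T_iff i).1 hT⟩, rfl, rfl⟩
  · rintro ⟨s, t, ⟨⟨hs, ht⟩, hT⟩, rfl, rfl⟩
    exact ⟨⟨hs, ht⟩, (insertAt_mem_T_iff i).2 hT⟩

lemma card_T_filter_mem (M k : ℕ) :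
    #{p ∈ T (N + 1) (M + 1) (k + 1) | i ∈ p.1 ∩ p.2} = #(T N M k) := by
  have h := card_product_inter_T_succ i (A := {x | i ∈ x}) (B := {x | i ∈ x})
    (by simp_all) M k
  have hlift : liftAt i {x | i ∈ x} = univ := by ext s; simp [liftAt, insertAt]
  rw [hlift, univ_product_univ, univ_inter] at h
  rw [← h]
  congr 1
  ext p
  simp [and_comm]

lemma succ_mul_card_T_succ (M k : ℕ) :
    (k + 1) * #(T (N + 1) (M + 1) (k + 1)) = (N + 1) * #(T N M k) := by
  have hsum := sum_card_eq_sum_card_filter_mem (T (N + 1) (M + 1) (k + 1)) (fun p => p.1 ∩ p.2)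
  have hinter : ∀ p ∈ T (N + 1) (M + 1) (k + 1), #(p.1 ∩ p.2) = k + 1 := fun p hp =>
    (mem_filter.1 hp).2.2.2
  rw [sum_congr rfl hinter, sum_const, smul_eq_mul] at hsum
  simp only [card_T_filter_mem, sum_const, card_univ, Fintype.card_fin, smul_eq_mul] at hsum
  rw [mul_comm, hsum]

lemma mu_succ_product_eq {A B : Finset (Finset (Fin (N + 1)))}
    (hAB : ∀ x ∈ A, ∀ y ∈ B, i ∈ x ∩ y) (M k : ℕ) :
    mu (N + 1) (M + 1) (k + 1) (A ×ˢ B) =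
      (k + 1) / (N + 1) * mu N M k (liftAt i A ×ˢ liftAt i B) := by
  have hT : (#(T (N + 1) (M + 1) (k + 1)) : ℝ) = (N + 1) * #(T N M k) / (k + 1) := by
    rw [eq_div_iff (by positivity)]
    exact_mod_cast (mul_comm _ _).trans (succ_mul_card_T_succ M k)
  rw [mu, mu, card_product_inter_T_succ i hAB, hT]
  rcases eq_or_ne (#(T N M k) : ℝ) 0 with h | h
  · simp [h]
  · field_simp

end InsertAt

lemma mu_nonneg (n m k : ℕ) (R : Finset (Finset (Fin n) × Finset (Fin n))) : 0 ≤ mu n m k R := by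
  unfold mu; positivity

lemma quarter_pred_mem_window {δ : ℝ} {N M : ℕ} (hM : 4 * (M + 1) = N + 1)
    (hδN : 3 / 4 ≤ δ * N) :
    (N : ℝ) / 4 - δ * N ≤ M ∧ (M : ℝ) ≤ N / 4 := by
  have : (4 * (M + 1) : ℝ) = N + 1 := by exact_mod_cast hM
  constructor <;> linarith

lemma small_or_ratio_of_implies {δ N a b : ℝ} (hδ : 0 ≤ δ) (hN : 1 ≤ N) (ha₀ : 0 ≤ a)
    (hab : a ≥ 2 ^ (-(δ * N)) → b ≥ 2 / 3 * a) :
    1 / (N + 1) * a ≤ 2 ^ (-(δ / 2 * (N + 1))) ∨ 2 / (N + 1) * b ≥ 4 / 3 * (1 / (N + 1) * a) := by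
  refine or_iff_not_imp_left.2 fun hbig => ?_
  have ha : a ≥ 2 ^ (-(δ * N)) := calc
    (2 : ℝ) ^ (-(δ * N)) ≤ 2 ^ (-(δ / 2 * (N + 1))) :=
      Real.rpow_le_rpow_of_exponent_le one_le_two (by nlinarith)
    _ ≤ 1 / (N + 1) * a := (not_le.1 hbig).le
    _ ≤ a := by
      rw [one_div_mul_eq_div]
      exact div_le_self ha₀ (by linarith)
  calc 2 / (N + 1) * b ≥ 2 / (N + 1) * (2 / 3 * a) := by
        gcongr
        exact hab ha
    _ = 4 / 3 * (1 / (N + 1) * a) := by ring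

theorem witnessed_rectangle_dichotomy_general (δ : ℝ) (hδ0 : 0 < δ)
    (hRaz : ∀ (n' m' : ℕ), 0 < n' →
      (n' : ℝ) / 4 - δ * n' ≤ (m' : ℝ) → (m' : ℝ) ≤ (n' : ℝ) / 4 →
      ∀ A' B' : Finset (Finset (Fin n')),
        (∀ x ∈ A', x.card = m') → (∀ y ∈ B', y.card = m') →
        mu n' m' 0 (A' ×ˢ B') ≥ (2 : ℝ) ^ (-(δ * n')) →
        mu n' m' 1 (A' ×ˢ B') ≥ (2 / 3) * mu n' m' 0 (A' ×ˢ B')) :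
    ∃ β : ℝ, 0 < β ∧ ∃ n₀ : ℕ, ∀ n : ℕ, n₀ ≤ n → 4 ∣ n →
      ∀ A B : Finset (Finset (Fin n)),
        (∀ x ∈ A, x.card = n / 4) → (∀ y ∈ B, y.card = n / 4) →
        (∃ i : Fin n, ∀ x ∈ A, ∀ y ∈ B, i ∈ x ∩ y) →
        mu n (n / 4) 1 (A ×ˢ B) ≤ (2 : ℝ) ^ (-(β * n)) ∨
          mu n (n / 4) 2 (A ×ˢ B) ≥ (4 / 3) * mu n (n / 4) 1 (A ×ˢ B) := by
  refine ⟨δ / 2, by positivity, ⌈δ⁻¹⌉₊ + 4, fun n hn h4 A B hA hB ⟨i, hi⟩ => ?_⟩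
  obtain ⟨N, rfl⟩ : ∃ N, n = N + 1 := ⟨n - 1, by omega⟩
  obtain ⟨M, hM⟩ : ∃ M, (N + 1) / 4 = M + 1 := ⟨(N + 1) / 4 - 1, by omega⟩
  have hδN : 1 ≤ δ * N := (inv_le_iff_one_le_mul₀' hδ0).1 <|
    (Nat.le_ceil _).trans (by exact_mod_cast (by omega : ⌈δ⁻¹⌉₊ ≤ N))
  obtain ⟨hlow, hupp⟩ := quarter_pred_mem_window (by omega : 4 * (M + 1) = N + 1)
    (by linarith : 3 / 4 ≤ δ * N)
  rw [hM] at hA hB ⊢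
  have hRazN := hRaz N M (by omega) hlow hupp _ _
    (fun _ => card_of_mem_liftAt i hA) (fun _ => card_of_mem_liftAt i hB)
  have key := small_or_ratio_of_implies hδ0.le (by exact_mod_cast (by omega : 1 ≤ N))
    (mu_nonneg ..) hRazN
  rw [mu_succ_product_eq i hi M 0, mu_succ_product_eq i hi M 1]
  push_cast
  norm_num at key ⊢
  exact key

/-- Assuming a Razborov-type lemma with constant `δ`, every rectangle with a witness
element `i` contained in all its intersections is either small on 1-intersection
inputs or has `μ₂(R) ≥ (4/3)·μ₁(R)`. -/
theorem witnessed_rectangle_dichotomy (δ : ℝ) (hδ0 : 0 < δ) (hδ1 : δ ≤ 1)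
    (hRaz : ∀ (n' m' : ℕ), 0 < n' →
      (n' : ℝ) / 4 - δ * n' ≤ (m' : ℝ) → (m' : ℝ) ≤ (n' : ℝ) / 4 →
      ∀ A' B' : Finset (Finset (Fin n')),
        (∀ x ∈ A', x.card = m') → (∀ y ∈ B', y.card = m') →
        mu n' m' 0 (A' ×ˢ B') ≥ (2 : ℝ) ^ (-(δ * n')) →
        mu n' m' 1 (A' ×ˢ B') ≥ (2 / 3) * mu n' m' 0 (A' ×ˢ B')) :
    ∃ β : ℝ, 0 < β ∧ ∃ n₀ : ℕ, ∀ n : ℕ, n₀ ≤ n → 4 ∣ n →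
      ∀ A B : Finset (Finset (Fin n)),
        (∀ x ∈ A, x.card = n / 4) → (∀ y ∈ B, y.card = n / 4) →
        (∃ i : Fin n, ∀ x ∈ A, ∀ y ∈ B, i ∈ x ∩ y) →
        mu n (n / 4) 1 (A ×ˢ B) ≤ (2 : ℝ) ^ (-(β * n)) ∨
          mu n (n / 4) 2 (A ×ˢ B) ≥ (4 / 3) * mu n (n / 4) 1 (A ×ˢ B) :=
  witnessed_rectangle_dichotomy_general δ hδ0 hRaz
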